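/- arXiv:2201.02908 — 5 statements merged into one kernel-verified Lean document; each statement's English description precedes it below -/
import Mathlib

section
/- Falb–Wolovich decoupling feedback (sufficiency part of Proposition 2.7). Let A ∈ ℝ^{n×n}, B ∈ ℝ^{n×p}, C ∈ ℝ^{p×n} be such that for every i ∈ {1,…,p} the relative order d_i exists, i.e. d_i ≤ n and C_i A^{d_i−1} B ≠ 0. If det B* ≠ 0 and one sets F = −(B*)⁻¹ A* and G = (B*)⁻¹, then over the field ℝ(s) of real rational functions the closed-loop transfer function C (sI − A − BF)⁻¹ B G equals the diagonal matrix diag(s^{−d_1}, …, s^{−d_p}). -/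
/-!
Write `A_F = A + B F` for the closed-loop matrix. Since `C_i A^j B = 0` for `j < d_i - 1`, the
feedback term never reaches row `i` of `C A_F^j` for `j < d_i`, so `C_i A_F^j = C_i A^j` there,
and `C_i A_F^{d_i} = C_i A^{d_i} + B*_i F = A*_i - A*_i = 0`. The truncated geometric series
`(Σ_{k<d} s^k M^{d-1-k}) (sI - M) = s^d I - M^d` then expresses row `i` of `C (sI - A_F)⁻¹`
as a polynomial in `s⁻¹`; after multiplying by `B` only its top term `s^{-d_i} C_i A^{d_i-1} B
= s^{-d_i} B*_i` survives, and `G = (B*)⁻¹` turns `B*` into the identity.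
-/

noncomputable section
open Matrix

/-- Entrywise embedding of a real matrix into matrices over the field ℝ(s). -/
noncomputable def toRat {k l : ℕ} (M : Matrix (Fin k) (Fin l) ℝ) :
    Matrix (Fin k) (Fin l) (RatFunc ℝ) :=
  M.map (algebraMap ℝ (RatFunc ℝ))

/-- The matrix `s I - M` over ℝ(s). -/
noncomputable def sIm {k : ℕ} (M : Matrix (Fin k) (Fin k) ℝ) :
    Matrix (Fin k) (Fin k) (RatFunc ℝ) :=
  Matrix.scalar (Fin k) (RatFunc.X : RatFunc ℝ) - toRat M

open Finset

section Feedback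

variable {R m n l o : Type*} [Semiring R] [Fintype n] [DecidableEq n] [Fintype l]
  (C : Matrix m n R) (A : Matrix n n R) (B : Matrix n l R) (F : Matrix l n R) (i : m)

theorem row_mul_pow_succ_add_mul {k : ℕ} (hk : (C * (A + B * F) ^ k) i = (C * A ^ k) i) :
    (C * (A + B * F) ^ (k + 1)) i = (C * A ^ (k + 1)) i + (C * A ^ k * B) i ᵥ* F := by
  rw [pow_succ, ← Matrix.mul_assoc, mul_apply_eq_vecMul, hk, vecMul_add, ← vecMul_vecMul]
  simp only [mul_apply_eq_vecMul, vecMul_vecMul, pow_succ, Matrix.mul_assoc]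

theorem row_mul_pow_add_mul {k : ℕ} (h : ∀ j < k, (C * A ^ j * B) i = 0) :
    (C * (A + B * F) ^ k) i = (C * A ^ k) i := by
  induction k with
  | zero => simp
  | succ k ih =>
    rw [row_mul_pow_succ_add_mul C A B F i (ih fun j hj => h j (by omega)), h k (by omega),
      zero_vecMul, add_zero]

theorem row_mul_pow_add_mul_mul {k : ℕ} (h : ∀ j < k, (C * A ^ j * B) i = 0)
    (N : Matrix n o R) :
    (C * (A + B * F) ^ k * N) i = (C * A ^ k * N) i := by
  rw [mul_apply_eq_vecMul, row_mul_pow_add_mul C A B F i h]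
  rfl

end Feedback

section GeomSum

variable {K n o : Type*} [CommRing K] [Fintype n] [DecidableEq n]
  (M : Matrix n n K) (x : K) (v : n → K)

theorem geom_sum_smul_mul_scalar_sub (d : ℕ) :
    (∑ k ∈ range d, x ^ k • M ^ (d - 1 - k)) * (scalar n x - M) = x ^ d • 1 - M ^ d := by
  have hgeom := (scalar_commute x (fun _ => Commute.all _ _) M).geom_sum₂_mul d
  simpa only [scalar_apply, ← smul_one_eq_diagonal, smul_pow, one_pow, smul_mul_assoc,
    Matrix.one_mul] using hgeom

theorem pow_smul_vecMul_inv_scalar_sub {d : ℕ} (hM : IsUnit (scalar n x - M).det)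
    (hv : v ᵥ* M ^ d = 0) :
    x ^ d • (v ᵥ* (scalar n x - M)⁻¹) =
      v ᵥ* ∑ k ∈ range d, x ^ k • M ^ (d - 1 - k) := by
  have h := congrArg (v ᵥ* · ᵥ* (scalar n x - M)⁻¹) (geom_sum_smul_mul_scalar_sub M x d)
  simp only [vecMul_vecMul, Matrix.mul_assoc, mul_nonsing_inv _ hM, Matrix.mul_one] at h
  rw [h, Matrix.sub_mul, vecMul_sub, ← vecMul_vecMul v (M ^ d), hv, zero_vecMul, sub_zero,
    smul_mul_assoc, Matrix.one_mul, vecMul_smul]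

theorem pow_succ_smul_vecMul_inv_scalar_sub_vecMul (N : Matrix n o K) {d : ℕ}
    (hM : IsUnit (scalar n x - M).det) (hv : v ᵥ* M ^ (d + 1) = 0)
    (hN : ∀ j < d, v ᵥ* M ^ j ᵥ* N = 0) :
    x ^ (d + 1) • (v ᵥ* (scalar n x - M)⁻¹ ᵥ* N) = v ᵥ* M ^ d ᵥ* N := by
  rw [← smul_vecMul, pow_smul_vecMul_inv_scalar_sub M x v hM hv, vecMul_sum, sum_vecMul,
    sum_eq_single_of_mem 0 (by simp)]
  · simp
  · intro k hk hk0
    have := mem_range.mp hk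
    rw [vecMul_smul, smul_vecMul, hN _ (by omega), smul_zero]

end GeomSum

theorem mul_eq_diagonal_inv_of_smul_row_eq {K m : Type*} [Field K] [Fintype m] [DecidableEq m]
    {T P Q : Matrix m m K} {c : m → K} (hc : ∀ i, c i ≠ 0) (hT : ∀ i, c i • T i = P i)
    (hPQ : P * Q = 1) : T * Q = diagonal fun i => (c i)⁻¹ := by
  have hTP : T = diagonal (fun i => (c i)⁻¹) * P := by
    ext i j
    rw [diagonal_mul, ← hT i, Pi.smul_apply, smul_eq_mul, inv_mul_cancel_left₀ (hc i)]
  rw [hTP, Matrix.mul_assoc, hPQ, Matrix.mul_one]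

theorem toRat_mul {k l r : ℕ} (P : Matrix (Fin k) (Fin l) ℝ) (Q : Matrix (Fin l) (Fin r) ℝ) :
    toRat (P * Q) = toRat P * toRat Q :=
  Matrix.map_mul

theorem toRat_pow {k : ℕ} (M : Matrix (Fin k) (Fin k) ℝ) (j : ℕ) :
    toRat (M ^ j) = toRat M ^ j :=
  Matrix.map_pow M _ j

theorem toRat_one {k : ℕ} : toRat (1 : Matrix (Fin k) (Fin k) ℝ) = 1 :=
  Matrix.map_one _ (map_zero _) (map_one _)

theorem toRat_row_eq_zero {k l : ℕ} {P : Matrix (Fin k) (Fin l) ℝ} {i : Fin k} (h : P i = 0) :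
    toRat P i = 0 := by
  ext j
  simp [toRat, congrFun h j]

open Polynomial in
theorem sIm_eq_map_charmatrix {k : ℕ} (M : Matrix (Fin k) (Fin k) ℝ) :
    sIm M = (charmatrix M).map (algebraMap ℝ[X] (RatFunc ℝ)) := by
  ext i j
  by_cases h : i = j
  · subst h
    simp [sIm, toRat, charmatrix_apply_eq, RatFunc.algebraMap_X, RatFunc.algebraMap_C]
  · simp [sIm, toRat, h, RatFunc.algebraMap_C]

theorem isUnit_det_sIm {k : ℕ} (M : Matrix (Fin k) (Fin k) ℝ) : IsUnit (sIm M).det := by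
  rw [isUnit_iff_ne_zero, sIm_eq_map_charmatrix, ← RingHom.mapMatrix_apply, ← RingHom.map_det,
    ← charpoly, Ne, map_eq_zero_iff _ (RatFunc.algebraMap_injective ℝ)]
  exact (charpoly_monic M).ne_zero

theorem pow_succ_smul_row_mul_inv_sIm_mul {p n q k : ℕ} (C : Matrix (Fin p) (Fin n) ℝ)
    (M : Matrix (Fin n) (Fin n) ℝ) (B : Matrix (Fin n) (Fin q) ℝ) (i : Fin p)
    (hv : (C * M ^ (k + 1)) i = 0) (hN : ∀ j < k, (C * M ^ j * B) i = 0) :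
    (RatFunc.X : RatFunc ℝ) ^ (k + 1) • (toRat C * (sIm M)⁻¹ * toRat B) i =
      toRat (C * M ^ k * B) i := by
  have hrow (j : ℕ) : toRat C i ᵥ* toRat M ^ j ᵥ* toRat B = toRat (C * M ^ j * B) i := by
    rw [toRat_mul, toRat_mul, toRat_pow]; rfl
  rw [← hrow, mul_apply_eq_vecMul, mul_apply_eq_vecMul]
  refine pow_succ_smul_vecMul_inv_scalar_sub_vecMul _ _ _ _ (isUnit_det_sIm M) ?_ fun j hj => ?_
  · rw [← toRat_pow, ← mul_apply_eq_vecMul, ← toRat_mul, toRat_row_eq_zero hv]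
  · rw [hrow, toRat_row_eq_zero (hN j hj)]

theorem pow_succ_smul_row_mul_inv_sIm_feedback_mul {p n q k : ℕ}
    (C : Matrix (Fin p) (Fin n) ℝ) (A : Matrix (Fin n) (Fin n) ℝ)
    (B : Matrix (Fin n) (Fin q) ℝ) (F : Matrix (Fin q) (Fin n) ℝ) (i : Fin p)
    (h : ∀ j < k, (C * A ^ j * B) i = 0)
    (hF : (C * A ^ (k + 1)) i + (C * A ^ k * B) i ᵥ* F = 0) :
    (RatFunc.X : RatFunc ℝ) ^ (k + 1) • (toRat C * (sIm (A + B * F))⁻¹ * toRat B) i =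
      toRat (C * A ^ k * B) i := by
  have hB : ∀ j ≤ k, (C * (A + B * F) ^ j * B) i = (C * A ^ j * B) i := fun j hj =>
    row_mul_pow_add_mul_mul C A B F i (fun j' hj' => h j' (by omega)) B
  have hzero : (C * (A + B * F) ^ (k + 1)) i = 0 := by
    rw [row_mul_pow_succ_add_mul C A B F i (row_mul_pow_add_mul C A B F i h), hF]
  rw [pow_succ_smul_row_mul_inv_sIm_mul C _ B i hzero fun j hj => by rw [hB j hj.le, h j hj]]
  ext l
  simp [toRat, hB k le_rfl]

theorem falb_wolovich_feedback_decouples_general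
    (n p : ℕ) (A : Matrix (Fin n) (Fin n) ℝ) (B : Matrix (Fin n) (Fin p) ℝ)
    (C : Matrix (Fin p) (Fin n) ℝ) (d : Fin p → ℕ)
    (hd1 : ∀ i, 1 ≤ d i)
    (hdmin : ∀ i, ∀ j, 1 ≤ j → j < d i → (fun l => (C * A ^ (j - 1) * B) i l) = 0)
    (Bstar : Matrix (Fin p) (Fin p) ℝ)
    (hBstar : Bstar = Matrix.of fun i j => (C * A ^ (d i - 1) * B) i j)
    (Astar : Matrix (Fin p) (Fin n) ℝ)
    (hAstar : Astar = Matrix.of fun i j => (C * A ^ (d i)) i j)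
    (hdet : Bstar.det ≠ 0)
    (F : Matrix (Fin p) (Fin n) ℝ) (hF : F = -(Bstar⁻¹ * Astar))
    (G : Matrix (Fin p) (Fin p) ℝ) (hG : G = Bstar⁻¹) :
    toRat C * (sIm (A + B * F))⁻¹ * toRat B * toRat G =
      Matrix.diagonal fun i => ((RatFunc.X : RatFunc ℝ) ^ d i)⁻¹ := by
  have hBunit : IsUnit Bstar.det := isUnit_iff_ne_zero.mpr hdet
  have hBF : Bstar * F = -Astar := by
    rw [hF, Matrix.mul_neg, ← Matrix.mul_assoc, mul_nonsing_inv _ hBunit, Matrix.one_mul]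
  have hrow (i : Fin p) :
      (RatFunc.X : RatFunc ℝ) ^ d i • (toRat C * (sIm (A + B * F))⁻¹ * toRat B) i =
        toRat Bstar i := by
    obtain ⟨k, hk⟩ : ∃ k, d i = k + 1 := ⟨d i - 1, by have := hd1 i; omega⟩
    have hmarkov : ∀ j < k, (C * A ^ j * B) i = 0 := fun j hj => by
      simpa using hdmin i (j + 1) (by omega) (by omega)
    have hBrow : Bstar i = (C * A ^ k * B) i := by
      rw [hBstar]
      show (C * A ^ (d i - 1) * B) i = _
      rw [hk, Nat.add_sub_cancel]
    have hcancel : (C * A ^ (k + 1)) i + (C * A ^ k * B) i ᵥ* F = 0 := by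
      rw [← hBrow, ← mul_apply_eq_vecMul, hBF, hAstar]
      show (C * A ^ (k + 1)) i + -(C * A ^ d i) i = 0
      rw [hk, add_neg_cancel]
    rw [hk, pow_succ_smul_row_mul_inv_sIm_feedback_mul C A B F i hmarkov hcancel]
    ext l
    simp [toRat, hBrow]
  refine mul_eq_diagonal_inv_of_smul_row_eq (fun i => pow_ne_zero _ RatFunc.X_ne_zero) hrow ?_
  rw [← toRat_mul, hG, mul_nonsing_inv _ hBunit, toRat_one]

/-- Falb–Wolovich decoupling feedback (sufficiency part of Proposition 2.7):
if every relative order `d i` exists (`d i` is the least `j ∈ {1,…,n}` with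
`Cᵢ A^(j-1) B ≠ 0`), `det B* ≠ 0`, `F = -(B*)⁻¹ A*`, `G = (B*)⁻¹`, then the
closed-loop transfer function is `diag (s^{-d 1}, …, s^{-d p})`. -/
theorem falb_wolovich_feedback_decouples
    (n p : ℕ) (A : Matrix (Fin n) (Fin n) ℝ) (B : Matrix (Fin n) (Fin p) ℝ)
    (C : Matrix (Fin p) (Fin n) ℝ) (d : Fin p → ℕ)
    (hd1 : ∀ i, 1 ≤ d i) (hdn : ∀ i, d i ≤ n)
    (hdne : ∀ i, (fun j => (C * A ^ (d i - 1) * B) i j) ≠ 0)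
    (hdmin : ∀ i, ∀ j, 1 ≤ j → j < d i → (fun l => (C * A ^ (j - 1) * B) i l) = 0)
    (Bstar : Matrix (Fin p) (Fin p) ℝ)
    (hBstar : Bstar = Matrix.of fun i j => (C * A ^ (d i - 1) * B) i j)
    (Astar : Matrix (Fin p) (Fin n) ℝ)
    (hAstar : Astar = Matrix.of fun i j => (C * A ^ (d i)) i j)
    (hdet : Bstar.det ≠ 0)
    (F : Matrix (Fin p) (Fin n) ℝ) (hF : F = -(Bstar⁻¹ * Astar))
    (G : Matrix (Fin p) (Fin p) ℝ) (hG : G = Bstar⁻¹) :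
    toRat C * (sIm (A + B * F))⁻¹ * toRat B * toRat G =
      Matrix.diagonal fun i => ((RatFunc.X : RatFunc ℝ) ^ d i)⁻¹ :=
  falb_wolovich_feedback_decouples_general n p A B C d hd1 hdmin Bstar hBstar Astar hAstar hdet F hF
    G hG
end
end

section
/- Key lemma for the Falb–Wolovich feedback. Let A ∈ ℝ^{n×n}, B ∈ ℝ^{n×p}, C ∈ ℝ^{p×n} be such that every relative order d_i exists (d_i ≤ n and C_i A^{d_i−1} B ≠ 0), suppose det B* ≠ 0, and set F = −(B*)⁻¹ A*, G = (B*)⁻¹. Then for every i ∈ {1,…,p}: (a) C_i (A + BF)^k = C_i A^k for all 0 ≤ k ≤ d_i − 1; (b) C_i (A + BF)^{d_i} = 0; and (c) C_i (A + BF)^{d_i−1} B G equals the i-th standard basis row vector e_iᵀ of ℝ^{1×p}. -/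
noncomputable section
open Matrix

private lemma fw_row_mul_congr {n' p' q' : Type*} [Fintype n'] (X Y : Matrix p' n' ℝ)
    (Z : Matrix n' q' ℝ) (i : p') (h : ∀ l, X i l = Y i l) :
    ∀ l, (X * Z) i l = (Y * Z) i l := by
  intro l; simp only [Matrix.mul_apply, h]

/-- Key lemma for the Falb–Wolovich feedback: with `F = -(B*)⁻¹ A*`, `G = (B*)⁻¹`,
for each output `i`: (a) `Cᵢ (A+BF)^k = Cᵢ A^k` for `0 ≤ k ≤ dᵢ - 1`;
(b) `Cᵢ (A+BF)^{dᵢ} = 0`; (c) `Cᵢ (A+BF)^{dᵢ-1} B G = eᵢᵀ`. -/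
theorem falb_wolovich_key_lemma
    (n p : ℕ) (A : Matrix (Fin n) (Fin n) ℝ) (B : Matrix (Fin n) (Fin p) ℝ)
    (C : Matrix (Fin p) (Fin n) ℝ) (d : Fin p → ℕ)
    (hd1 : ∀ i, 1 ≤ d i) (hdn : ∀ i, d i ≤ n)
    (hdne : ∀ i, (fun j => (C * A ^ (d i - 1) * B) i j) ≠ 0)
    (hdmin : ∀ i, ∀ j, 1 ≤ j → j < d i → (fun l => (C * A ^ (j - 1) * B) i l) = 0)
    (Bstar : Matrix (Fin p) (Fin p) ℝ)
    (hBstar : Bstar = Matrix.of fun i j => (C * A ^ (d i - 1) * B) i j)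
    (Astar : Matrix (Fin p) (Fin n) ℝ)
    (hAstar : Astar = Matrix.of fun i j => (C * A ^ (d i)) i j)
    (hdet : Bstar.det ≠ 0)
    (F : Matrix (Fin p) (Fin n) ℝ) (hF : F = -(Bstar⁻¹ * Astar))
    (G : Matrix (Fin p) (Fin p) ℝ) (hG : G = Bstar⁻¹) :
    ∀ i : Fin p,
      (∀ k : ℕ, k ≤ d i - 1 →
        (fun l => (C * (A + B * F) ^ k) i l) = fun l => (C * A ^ k) i l) ∧
      ((fun l => (C * (A + B * F) ^ (d i)) i l) = 0) ∧
      ((fun j => (C * (A + B * F) ^ (d i - 1) * B * G) i j) =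
        fun j => if j = i then (1 : ℝ) else 0) := by
  intro i
  have hd0 : 0 < d i := hd1 i
  have hu : IsUnit Bstar.det := isUnit_iff_ne_zero.mpr hdet
  have hsp : d i - 1 + 1 = d i := Nat.succ_pred_eq_of_pos hd0
  have hzero : ∀ k, k + 1 ≤ d i - 1 → ∀ j, (C * A ^ k * B) i j = 0 := by
    intro k hk j
    have h2 : k + 1 < d i := lt_of_le_of_lt hk (Nat.sub_lt hd0 one_pos)
    have h := congrFun (hdmin i (k + 1) (Nat.le_add_left 1 k) h2) j
    simpa using h
  have key : ∀ k, k ≤ d i - 1 → ∀ l, (C * (A + B * F) ^ k) i l = (C * A ^ k) i l := by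
    intro k
    induction k with
    | zero => intro _ l; simp
    | succ k ih =>
      intro hk l
      have hk' : k ≤ d i - 1 := Nat.le_of_succ_le hk
      have h1 : (C * (A + B * F) ^ (k + 1)) i l = (C * A ^ k * (A + B * F)) i l := by
        conv_lhs => rw [pow_succ, ← Matrix.mul_assoc]
        exact fw_row_mul_congr _ _ _ i (ih hk') l
      have h2 : C * A ^ k * (A + B * F) = C * A ^ (k + 1) + C * A ^ k * B * F := by
        rw [Matrix.mul_add, pow_succ, ← Matrix.mul_assoc, ← Matrix.mul_assoc]
      have h3 : (C * A ^ k * B * F) i l = 0 := by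
        have hz : ∀ j, (C * A ^ k * B) i j = 0 := hzero k hk
        simp [Matrix.mul_apply, hz]
      rw [h1, h2]
      simp [Matrix.add_apply, h3]
  have hrowB : ∀ j, (C * A ^ (d i - 1) * B) i j = Bstar i j := by
    intro j; rw [hBstar]; rfl
  have hBF : Bstar * F = -Astar := by
    rw [hF, Matrix.mul_neg, ← Matrix.mul_assoc, Matrix.mul_nonsing_inv _ hu, Matrix.one_mul]
  refine ⟨fun k hk => funext (key k hk), ?_, ?_⟩
  · funext l
    have e1 : (C * (A + B * F) ^ d i) i l = (C * A ^ (d i - 1) * (A + B * F)) i l := by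
      conv_lhs => rw [← hsp, pow_succ, ← Matrix.mul_assoc]
      exact fw_row_mul_congr _ _ _ i (key _ le_rfl) l
    have e2 : C * A ^ (d i - 1) * (A + B * F)
        = C * A ^ (d i - 1) * A + C * A ^ (d i - 1) * B * F := by
      rw [Matrix.mul_add, ← Matrix.mul_assoc]
    have e3 : (C * A ^ (d i - 1) * A) i l = Astar i l := by
      rw [Matrix.mul_assoc, ← pow_succ, hsp, hAstar]; rfl
    have e4 : (C * A ^ (d i - 1) * B * F) i l = (Bstar * F) i l :=
      fw_row_mul_congr _ _ _ i hrowB l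
    show (C * (A + B * F) ^ d i) i l = 0
    rw [e1, e2, Matrix.add_apply, e3, e4, hBF]
    simp
  · funext j
    have e1 : (C * (A + B * F) ^ (d i - 1) * B * G) i j
        = (C * A ^ (d i - 1) * B * G) i j :=
      fw_row_mul_congr _ _ G i (fw_row_mul_congr _ _ B i (key _ le_rfl)) j
    have e2 : (C * A ^ (d i - 1) * B * G) i j = (Bstar * G) i j :=
      fw_row_mul_congr _ _ _ i hrowB j
    rw [e1, e2, hG, Matrix.mul_nonsing_inv _ hu, Matrix.one_apply]
    simp [eq_comm]
end
end

section
/- SISO pole assignment with uniqueness (Proposition 2.29). Let A ∈ ℝ^{n×n} and b ∈ ℝ^{n×1} be such that the pair (A, b) is controllable, i.e. the n×n matrix [b, Ab, …, A^{n−1}b] has rank n. Then for every monic polynomial Δ̄ ∈ ℝ[s] of degree n there exists exactly one row vector K ∈ ℝ^{1×n} such that the characteristic polynomial of A + bK equals Δ̄. -/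
/-!
By the matrix determinant lemma, `χ_{A + bK} = χ_A - K adj(X - A) b`. Writing
`adj(X - A) = ∑ₖ Xᵏ Nₖ`, the `Nₖ` vanish for `k ≥ n`, so the coefficients of `χ_{A + bK}` below `n`
are those of `χ_A` minus the linear function `K ↦ (K Nₖ b)ₖ` of `K`, and the higher ones are fixed
by monicity. The theorem thus reduces to the injectivity of this linear map `ℝⁿ → ℝⁿ`.
Comparing coefficients in `(X - A) adj(X - A) = χ_A = ∑ₖ cₖ Xᵏ` gives `N_{n-1} = 1`,
`A Nₖ₊₁ = Nₖ - cₖ₊₁` and `A N₀ = -c₀`, so the span of the `Nₖ b` contains `b` and is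
`A`-invariant. Hence a `K` killing every `Nₖ b` kills every `Aʲ b`, and controllability forces
`K = 0`.
-/

noncomputable section
open Matrix Polynomial

/-- The controllability matrix `[b, Ab, …, A^(n-1) b]` of a single-input pair
`(A, b)`, as an `n × n` matrix indexed by `Fin n × Fin 1`. -/
def ctrbMat (n : ℕ) (A : Matrix (Fin n) (Fin n) ℝ) (b : Matrix (Fin n) (Fin 1) ℝ) :
    Matrix (Fin n) (Fin n × Fin 1) ℝ :=
  Matrix.of fun i kj => (A ^ (kj.1 : ℕ) * b) i kj.2

section DeterminantLemma

variable {m ι : Type*} [Fintype m] [DecidableEq m] [Unique ι]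

theorem Matrix.det_add_replicateCol_mul_replicateRow_of_det_ne_zero {K : Type*} [Field K]
    {M : Matrix m m K} (hM : M.det ≠ 0) (u v : m → K) :
    (M + replicateCol ι u * replicateRow ι v).det = M.det + v ⬝ᵥ (M.adjugate *ᵥ u) := by
  rw [det_add_replicateCol_mul_replicateRow (isUnit_iff_ne_zero.2 hM),
    det_unique (1 + replicateRow ι v * M⁻¹ * replicateCol ι u),
    Matrix.add_apply, Matrix.mul_assoc, ← replicateCol_mulVec, replicateRow_mul_replicateCol_apply,
    one_apply_eq, inv_def, Ring.inverse_eq_inv, smul_mulVec, dotProduct_smul, smul_eq_mul,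
    mul_add, mul_one, ← mul_assoc, mul_inv_cancel₀ hM, one_mul]

theorem Matrix.det_add_replicateCol_mul_replicateRow_of_isDomain {R : Type*} [CommRing R]
    [IsDomain R] {M : Matrix m m R} (hM : M.det ≠ 0) (u v : m → R) :
    (M + replicateCol ι u * replicateRow ι v).det = M.det + v ⬝ᵥ (M.adjugate *ᵥ u) := by
  let f : R →+* FractionRing R := algebraMap R (FractionRing R)
  have hf : Function.Injective f := IsFractionRing.injective R (FractionRing R)
  have hdet : (f.mapMatrix M).det ≠ 0 := by
    rwa [← RingHom.map_det, ne_eq, map_eq_zero_iff f hf]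
  apply hf
  convert det_add_replicateCol_mul_replicateRow_of_det_ne_zero (ι := ι) hdet (f ∘ u) (f ∘ v) using 1
  · rw [RingHom.map_det, map_add]
    congr 2
    ext i j
    simp [replicateCol, replicateRow, mul_apply]
  · rw [map_add, RingHom.map_det, RingHom.map_dotProduct, ← RingHom.map_adjugate]
    congr 2
    exact funext (f.map_mulVec _ _)

end DeterminantLemma

theorem Matrix.vecMul_injective_of_rank_eq_card {m p K : Type*} [Fintype m] [Fintype p] [Field K]
    {M : Matrix m p K} (h : M.rank = Fintype.card m) : Function.Injective M.vecMul :=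
  vecMul_injective_iff.mpr <| linearIndependent_iff_card_eq_finrank_span.mpr <| by
    rw [Set.finrank, ← M.rank_eq_finrank_span_row, h]

theorem Polynomial.Monic.eq_iff_forall_coeff_lt {R : Type*} [Semiring R] {p q : R[X]} {n : ℕ}
    (hp : p.Monic) (hq : q.Monic) (hpn : p.natDegree = n) (hqn : q.natDegree = n) :
    p = q ↔ ∀ i < n, p.coeff i = q.coeff i := by
  rw [ext_iff_natDegree_le hpn.le hqn.le]
  refine ⟨fun h i hi => h i hi.le, fun h i hi => ?_⟩
  rcases hi.lt_or_eq with hi | rfl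
  · exact h i hi
  · rw [← hpn, hp.coeff_natDegree, hpn, ← hqn, hq.coeff_natDegree]

section AdjugateCharmatrix

variable {m R : Type*} [Fintype m] [DecidableEq m] [CommRing R] (A : Matrix m m R)

def adjugateCharmatrixCoeff (k : ℕ) : Matrix m m R :=
  (matPolyEquiv (charmatrix A).adjugate).coeff k

theorem X_sub_C_mul_matPolyEquiv_adjugate_charmatrix :
    (X - C A) * matPolyEquiv (charmatrix A).adjugate =
      A.charpoly.map (algebraMap R (Matrix m m R)) := by
  rw [← matPolyEquiv_charmatrix, ← map_mul, mul_adjugate, matPolyEquiv_smul_one, charpoly]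

theorem adjugateCharmatrixCoeff_eq (k : ℕ) :
    adjugateCharmatrixCoeff A k =
      A * adjugateCharmatrixCoeff A (k + 1) + A.charpoly.coeff (k + 1) • 1 := by
  have h := congrArg (coeff · (k + 1)) (X_sub_C_mul_matPolyEquiv_adjugate_charmatrix A)
  simp only [coeff_X_sub_C_mul, coeff_map, Algebra.algebraMap_eq_smul_one] at h
  rw [adjugateCharmatrixCoeff, adjugateCharmatrixCoeff, ← h, add_sub_cancel]

theorem mul_adjugateCharmatrixCoeff_zero :
    A * adjugateCharmatrixCoeff A 0 = -(A.charpoly.coeff 0 • 1) := by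
  have h := congrArg (coeff · 0) (X_sub_C_mul_matPolyEquiv_adjugate_charmatrix A)
  simp only [mul_coeff_zero, coeff_map, Algebra.algebraMap_eq_smul_one, coeff_sub, coeff_X_zero,
    coeff_C_zero, zero_sub, neg_mul] at h
  rw [adjugateCharmatrixCoeff, ← h, neg_neg]

theorem adjugateCharmatrixCoeff_eq_zero [Nontrivial R] {k : ℕ} (hk : Fintype.card m ≤ k) :
    adjugateCharmatrixCoeff A k = 0 := by
  rcases isEmpty_or_nonempty m with hm | hm
  · exact Subsingleton.elim _ _
  apply coeff_eq_zero_of_natDegree_lt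
  by_cases hP : matPolyEquiv (charmatrix A).adjugate = 0
  · rw [hP, natDegree_zero]
    exact lt_of_lt_of_le Fintype.card_pos hk
  have h := congrArg natDegree (X_sub_C_mul_matPolyEquiv_adjugate_charmatrix A)
  rw [(monic_X_sub_C A).natDegree_mul' hP, natDegree_X_sub_C] at h
  have := (natDegree_map_le (f := algebraMap R (Matrix m m R)) (p := A.charpoly)).trans_eq
    A.charpoly_natDegree_eq_dim
  omega

theorem charmatrix_add_replicateCol_mul_replicateRow {ι : Type*} [Unique ι] (u v : m → R) :
    charmatrix (A + replicateCol ι u * replicateRow ι v) =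
      charmatrix A + replicateCol ι (C ∘ u) * replicateRow ι (-(C ∘ v)) := by
  ext i j : 1
  simp only [charmatrix_apply, Matrix.add_apply, mul_apply, Finset.univ_unique, replicateCol_apply,
    replicateRow_apply, Finset.sum_const, Finset.card_singleton, one_smul, map_add, map_mul,
    Function.comp_apply, Pi.neg_apply, mul_neg]
  ring

theorem coeff_charpoly_add_replicateCol_mul_replicateRow [IsDomain R] {ι : Type*} [Unique ι]
    (u v : m → R) (k : ℕ) :
    (A + replicateCol ι u * replicateRow ι v).charpoly.coeff k =
      A.charpoly.coeff k - v ⬝ᵥ (adjugateCharmatrixCoeff A k *ᵥ u) := by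
  rw [charpoly, charmatrix_add_replicateCol_mul_replicateRow,
    det_add_replicateCol_mul_replicateRow_of_isDomain A.charpoly_monic.ne_zero, coeff_add,
    ← charpoly, neg_dotProduct, coeff_neg, ← sub_eq_add_neg]
  simp [dotProduct, mulVec, adjugateCharmatrixCoeff, matPolyEquiv_coeff_apply,
    Finset.mul_sum]

end AdjugateCharmatrix

section Krylov

variable {m R : Type*} [Fintype m] [DecidableEq m] [CommRing R] [Nontrivial R] (A : Matrix m m R)

theorem adjugateCharmatrixCoeff_card_sub_one [Nonempty m] :
    adjugateCharmatrixCoeff A (Fintype.card m - 1) = 1 := by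
  have hcard : Fintype.card m - 1 + 1 = Fintype.card m := Nat.sub_add_cancel Fintype.card_pos
  rw [adjugateCharmatrixCoeff_eq, hcard, adjugateCharmatrixCoeff_eq_zero A le_rfl, mul_zero,
    zero_add, ← A.charpoly_natDegree_eq_dim, A.charpoly_monic.coeff_natDegree, one_smul]

theorem mulVec_pow_mem_span_adjugateCharmatrixCoeff_mulVec (b : m → R) (j : ℕ) :
    A ^ j *ᵥ b ∈ Submodule.span R (Set.range fun k => adjugateCharmatrixCoeff A k *ᵥ b) := by
  set W := Submodule.span R (Set.range fun k => adjugateCharmatrixCoeff A k *ᵥ b)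
  have hb : b ∈ W := by
    rcases isEmpty_or_nonempty m with hm | hm
    · rw [Subsingleton.elim b 0]
      exact W.zero_mem
    · rw [← one_mulVec b, ← adjugateCharmatrixCoeff_card_sub_one A]
      exact Submodule.subset_span ⟨_, rfl⟩
  have hgen : ∀ k, A *ᵥ (adjugateCharmatrixCoeff A k *ᵥ b) ∈ W := by
    rintro (_ | k)
    · rw [mulVec_mulVec, mul_adjugateCharmatrixCoeff_zero, neg_mulVec, smul_mulVec, one_mulVec]
      exact W.neg_mem (W.smul_mem _ hb)
    · rw [mulVec_mulVec, eq_sub_of_add_eq (adjugateCharmatrixCoeff_eq A k).symm, sub_mulVec,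
        smul_mulVec, one_mulVec]
      exact W.sub_mem (Submodule.subset_span ⟨k, rfl⟩) (W.smul_mem _ hb)
  have hW : W ≤ W.comap A.mulVecLin := Submodule.span_le.mpr (Set.range_subset_iff.mpr hgen)
  induction j with
  | zero => simpa using hb
  | succ j ih => simpa [pow_succ', ← mulVec_mulVec] using hW ih

theorem dotProduct_pow_mulVec_eq_zero {b x : m → R}
    (hx : ∀ k, x ⬝ᵥ (adjugateCharmatrixCoeff A k *ᵥ b) = 0) (j : ℕ) : x ⬝ᵥ (A ^ j *ᵥ b) = 0 := by
  refine Submodule.span_induction (p := fun y _ => x ⬝ᵥ y = 0) ?_ (dotProduct_zero x) ?_ ?_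
    (mulVec_pow_mem_span_adjugateCharmatrixCoeff_mulVec A b j)
  · rintro _ ⟨k, rfl⟩
    exact hx k
  · intro y z _ _ hy hz
    rw [dotProduct_add, hy, hz, add_zero]
  · intro c y _ hy
    rw [dotProduct_smul, hy, smul_zero]

end Krylov

section PoleAssignment

variable {n : ℕ} (A : Matrix (Fin n) (Fin n) ℝ) (b : Matrix (Fin n) (Fin 1) ℝ)

theorem eq_zero_of_forall_dotProduct_pow_mulVec_eq_zero (hctrb : (ctrbMat n A b).rank = n)
    {x : Fin n → ℝ} (hx : ∀ j, x ⬝ᵥ (A ^ j *ᵥ b.col 0) = 0) : x = 0 := by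
  refine vecMul_injective_of_rank_eq_card (hctrb.trans (Fintype.card_fin n).symm) ?_
  change x ᵥ* ctrbMat n A b = 0 ᵥ* ctrbMat n A b
  ext ⟨j, l⟩
  rw [Subsingleton.elim l 0, zero_vecMul, Pi.zero_apply, ← hx j]
  simp [ctrbMat, vecMul, dotProduct, mulVec, mul_apply]

def feedbackCoeffMatrix : Matrix (Fin n) (Fin n) ℝ :=
  .of fun k => adjugateCharmatrixCoeff A k *ᵥ b.col 0

theorem coeff_charpoly_add_mul (K : Matrix (Fin 1) (Fin n) ℝ) (k : Fin n) :
    (A + b * K).charpoly.coeff k = A.charpoly.coeff k - (feedbackCoeffMatrix A b *ᵥ K.row 0) k := by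
  have hbK : b * K = replicateCol (Fin 1) (b.col 0) * replicateRow (Fin 1) (K.row 0) := by
    ext i j
    simp [mul_apply]
  rw [hbK]
  -- not `rw`: the product `b * K` multiplies over `Fin.fintype 1`, the lemma over
  -- `Unique.fintype`, and these agree only up to unfolding
  exact (coeff_charpoly_add_replicateCol_mul_replicateRow A (b.col 0) (K.row 0) k).trans <| by
    rw [dotProduct_comm]
    rfl

theorem feedbackCoeffMatrix_mulVec_injective (hctrb : (ctrbMat n A b).rank = n) :
    Function.Injective (feedbackCoeffMatrix A b).mulVec := by
  rw [← coe_mulVecLin, ← LinearMap.ker_eq_bot, LinearMap.ker_eq_bot']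
  intro x hx
  refine eq_zero_of_forall_dotProduct_pow_mulVec_eq_zero A b hctrb
    (dotProduct_pow_mulVec_eq_zero A fun k => ?_)
  rcases lt_or_ge k n with hk | hk
  · rw [dotProduct_comm]
    exact congrFun hx ⟨k, hk⟩
  · rw [adjugateCharmatrixCoeff_eq_zero A (by simpa using hk), zero_mulVec, dotProduct_zero]

theorem feedbackCoeffMatrix_mulVec_bijective (hctrb : (ctrbMat n A b).rank = n) :
    Function.Bijective (feedbackCoeffMatrix A b).mulVec :=
  have hinj := feedbackCoeffMatrix_mulVec_injective A b hctrb
  ⟨hinj, mulVec_surjective_iff_isUnit.mpr (mulVec_injective_iff_isUnit.mp hinj)⟩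

theorem charpoly_add_mul_eq_iff {Δ : ℝ[X]} (hΔ : Δ.Monic) (hdeg : Δ.natDegree = n)
    (K : Matrix (Fin 1) (Fin n) ℝ) :
    (A + b * K).charpoly = Δ ↔
      feedbackCoeffMatrix A b *ᵥ K.row 0 = fun k : Fin n => A.charpoly.coeff k - Δ.coeff k := by
  rw [(charpoly_monic _).eq_iff_forall_coeff_lt hΔ
    ((charpoly_natDegree_eq_dim _).trans (Fintype.card_fin n)) hdeg, Nat.forall_lt_iff_fin,
    funext_iff]
  refine forall_congr' fun k => ?_
  rw [coeff_charpoly_add_mul, sub_eq_iff_eq_add', eq_sub_iff_add_eq, eq_comm]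

end PoleAssignment

/-- SISO pole assignment with uniqueness (Proposition 2.29): if `(A, b)` is
controllable, then for every monic real polynomial `Δ̄` of degree `n` there is
exactly one row vector `K` with `charpoly (A + b K) = Δ̄`. -/
theorem siso_pole_assignment_unique
    (n : ℕ) (A : Matrix (Fin n) (Fin n) ℝ) (b : Matrix (Fin n) (Fin 1) ℝ)
    (hctrb : (ctrbMat n A b).rank = n) :
    ∀ Δ : Polynomial ℝ, Δ.Monic → Δ.natDegree = n →
      ∃! K : Matrix (Fin 1) (Fin n) ℝ, (A + b * K).charpoly = Δ := by
  intro Δ hΔ hdeg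
  obtain ⟨x, hx, hx_unique⟩ := (feedbackCoeffMatrix_mulVec_bijective A b hctrb).existsUnique
    fun k : Fin n => A.charpoly.coeff k - Δ.coeff k
  refine ⟨replicateRow (Fin 1) x, (charpoly_add_mul_eq_iff A b hΔ hdeg _).mpr hx, fun K hK => ?_⟩
  ext i j
  rw [Subsingleton.elim i 0]
  exact congrFun (hx_unique _ ((charpoly_add_mul_eq_iff A b hΔ hdeg K).mp hK)) j
end
end

section
/- SISO numerator formula (equations (93)–(95)). Let A ∈ ℝ^{n×n}, b ∈ ℝ^{n×1}, c ∈ ℝ^{1×n}, and let Δ(s) = Σ_{j=0}^{n} α_j s^j (α_n = 1) be the characteristic polynomial of A. Then over ℝ(s): Δ(s) · c (sI − A)⁻¹ b = Σ_{k=1}^{n} ( Σ_{j=k}^{n} α_j s^{j−k} ) · (c A^{k−1} b). Consequently, if d ≥ 1 is such that c A^{k−1} b = 0 for all 1 ≤ k < d, the sum may be taken over d ≤ k ≤ n, giving the polynomial m(s) of the paper with c(sI − A)⁻¹ b = m(s)/Δ(s). -/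
noncomputable section
open Matrix Polynomial

lemma sum_Icc_one {M : Type*} [AddCommMonoid M] (n : ℕ) (f : ℕ → M) :
    ∑ k ∈ Finset.Icc 1 n, f k = ∑ i ∈ Finset.range n, f (i + 1) := by
  rw [← Finset.Ico_add_one_right_eq_Icc, Finset.sum_Ico_eq_sum_range]
  simp [add_comm]

set_option maxHeartbeats 2000000 in
set_option synthInstance.maxHeartbeats 1000000 in
/-- SISO numerator formula (equations (93)–(95)): with `Δ(s) = Σ αⱼ sʲ` the
characteristic polynomial of `A`,
`Δ(s) · c (sI - A)⁻¹ b = Σ_{k=1}^{n} (Σ_{j=k}^{n} αⱼ s^{j-k}) (c A^{k-1} b)`;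
and if `c A^{k-1} b = 0` for `1 ≤ k < d`, the sum may be taken over `d ≤ k ≤ n`,
yielding `c (sI - A)⁻¹ b = m(s)/Δ(s)`. -/
theorem siso_numerator_formula
    (n : ℕ) (A : Matrix (Fin n) (Fin n) ℝ) (b : Matrix (Fin n) (Fin 1) ℝ)
    (c : Matrix (Fin 1) (Fin n) ℝ)
    (d : ℕ) (hd : 1 ≤ d)
    (hzero : ∀ k : ℕ, 1 ≤ k → k < d → c * A ^ (k - 1) * b = 0) :
    (algebraMap (Polynomial ℝ) (RatFunc ℝ) A.charpoly) *
        ((toRat c * (sIm A)⁻¹ * toRat b) 0 0) =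
      ∑ k ∈ Finset.Icc 1 n,
        (∑ j ∈ Finset.Icc k n,
            algebraMap ℝ (RatFunc ℝ) (A.charpoly.coeff j) * (RatFunc.X : RatFunc ℝ) ^ (j - k)) *
          algebraMap ℝ (RatFunc ℝ) ((c * A ^ (k - 1) * b) 0 0) ∧
    (toRat c * (sIm A)⁻¹ * toRat b) 0 0 =
      (∑ k ∈ Finset.Icc d n,
        (∑ j ∈ Finset.Icc k n,
            algebraMap ℝ (RatFunc ℝ) (A.charpoly.coeff j) * (RatFunc.X : RatFunc ℝ) ^ (j - k)) *
          algebraMap ℝ (RatFunc ℝ) ((c * A ^ (k - 1) * b) 0 0)) /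
        algebraMap (Polynomial ℝ) (RatFunc ℝ) A.charpoly := by
  let φ := algebraMap ℝ (RatFunc ℝ)
  let Φ := algebraMap (Polynomial ℝ) (RatFunc ℝ)
  let A' : Matrix (Fin n) (Fin n) (RatFunc ℝ) := toRat A
  let α : ℕ → ℝ := fun j => A.charpoly.coeff j
  let p : ℕ → RatFunc ℝ :=
    fun k => ∑ j ∈ Finset.Icc k n, φ (α j) * (RatFunc.X : RatFunc ℝ) ^ (j - k)
  let N : Matrix (Fin n) (Fin n) (RatFunc ℝ) := ∑ i ∈ Finset.range n, p (i + 1) • A' ^ i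
  have hmonic : A.charpoly.Monic := Matrix.charpoly_monic A
  have hΔ : Φ A.charpoly ≠ 0 := RatFunc.algebraMap_ne_zero hmonic.ne_zero
  have hdeg : A.charpoly.natDegree < n + 1 := by
    have := A.charpoly_natDegree_eq_dim
    simp only [Fintype.card_fin] at this
    omega
  -- p 0 = Δ(s)
  have hp0 : p 0 = Φ A.charpoly := by
    show ∑ j ∈ Finset.Icc 0 n, φ (α j) * (RatFunc.X : RatFunc ℝ) ^ (j - 0) = _
    conv_rhs => rw [A.charpoly.as_sum_range' (n + 1) hdeg, map_sum]
    rw [show Finset.Icc 0 n = Finset.range (n + 1) from by ext x; simp [Nat.lt_succ_iff]]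
    refine Finset.sum_congr rfl fun j hj => ?_
    rw [← Polynomial.C_mul_X_pow_eq_monomial, _root_.map_mul, map_pow,
      RatFunc.algebraMap_C, RatFunc.algebraMap_X, Nat.sub_zero]
    rw [show φ (α j) = RatFunc.C (A.charpoly.coeff j) from by
      simp [φ, α, RatFunc.algebraMap_eq_C]]
  -- p n = αₙ
  have hpn : p n = φ (α n) := by
    show ∑ j ∈ Finset.Icc n n, φ (α j) * (RatFunc.X : RatFunc ℝ) ^ (j - n) = _
    simp
  -- recursion for p
  have hXp : ∀ i : ℕ, i < n → RatFunc.X * p (i + 1) = p i - φ (α i) := by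
    intro i hi
    show RatFunc.X * ∑ j ∈ Finset.Icc (i + 1) n, φ (α j) * (RatFunc.X : RatFunc ℝ) ^ (j - (i + 1))
      = (∑ j ∈ Finset.Icc i n, φ (α j) * (RatFunc.X : RatFunc ℝ) ^ (j - i)) - φ (α i)
    rw [show Finset.Icc i n = insert i (Finset.Icc (i + 1) n) from by
      ext x; simp only [Finset.mem_Icc, Finset.mem_insert]; omega]
    rw [Finset.sum_insert (by simp), Nat.sub_self, pow_zero, mul_one,
      add_sub_cancel_left, Finset.mul_sum]
    refine Finset.sum_congr rfl fun j hj => ?_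
    have hji : i + 1 ≤ j := (Finset.mem_Icc.mp hj).1
    rw [show j - i = (j - (i + 1)) + 1 from by omega, pow_succ]
    ring
  -- Cayley–Hamilton over ℝ(s)
  have hCH : ∑ j ∈ Finset.range (n + 1), φ (α j) • A' ^ j = 0 := by
    have h0 : (aeval A' A.charpoly) = 0 := by
      have hψ : A' = (AlgHom.mapMatrix (Algebra.ofId ℝ (RatFunc ℝ))) A := rfl
      rw [hψ, Polynomial.aeval_algHom_apply, Matrix.aeval_self_charpoly, map_zero]
    rw [← h0]
    conv_rhs => rw [A.charpoly.as_sum_range' (n + 1) hdeg, map_sum]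
    refine Finset.sum_congr rfl fun j hj => ?_
    rw [Polynomial.aeval_monomial, ← Algebra.smul_def, algebraMap_smul]
  -- sI - A as smul
  have hsIm : sIm A = (RatFunc.X : RatFunc ℝ) • (1 : Matrix (Fin n) (Fin n) (RatFunc ℝ)) - A' := by
    unfold sIm
    congr 1
    ext i j
    by_cases h : i = j <;> simp [Matrix.scalar_apply, Matrix.one_apply, Matrix.diagonal_apply, h]
  -- key identity: (sI - A) * N = Δ • 1
  have hSN : sIm A * N = Φ A.charpoly • (1 : Matrix (Fin n) (Fin n) (RatFunc ℝ)) := by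
    have hterm : ∀ i ∈ Finset.range n,
        sIm A * (p (i + 1) • A' ^ i)
          = (p i • A' ^ i - p (i + 1) • A' ^ (i + 1)) - φ (α i) • A' ^ i := by
      intro i hi
      have hi' : i < n := Finset.mem_range.mp hi
      rw [mul_smul_comm, hsIm, sub_mul, smul_mul_assoc, one_mul, ← pow_succ',
        smul_sub, smul_smul, mul_comm (p (i + 1)) (RatFunc.X : RatFunc ℝ), hXp i hi', sub_smul]
      abel
    show sIm A * ∑ i ∈ Finset.range n, p (i + 1) • A' ^ i = _
    rw [Finset.mul_sum, Finset.sum_congr rfl hterm, Finset.sum_sub_distrib,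
      Finset.sum_range_sub' (fun i => p i • A' ^ i) n]
    have h2 : ∑ i ∈ Finset.range n, φ (α i) • A' ^ i = -(φ (α n) • A' ^ n) := by
      refine eq_neg_of_add_eq_zero_left ?_
      rw [← Finset.sum_range_succ]
      exact hCH
    rw [h2, pow_zero, hp0, hpn]
    abel
  -- inverse formula
  have hinv : (sIm A)⁻¹ = (Φ A.charpoly)⁻¹ • N := by
    apply Matrix.inv_eq_right_inv
    rw [Matrix.mul_smul, hSN, smul_smul, inv_mul_cancel₀ hΔ, one_smul]
  -- mapped products
  have hmap : ∀ i : ℕ, toRat c * A' ^ i * toRat b = toRat (c * A ^ i * b) := by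
    intro i
    have hpow : A' ^ i = (A ^ i).map φ := by
      induction i with
      | zero =>
          rw [pow_zero, pow_zero]
          exact (Matrix.map_one φ (map_zero φ) (map_one φ)).symm
      | succ k ih =>
          rw [pow_succ, pow_succ, ih, Matrix.map_mul]
          rfl
    rw [hpow]
    unfold toRat
    rw [Matrix.map_mul, Matrix.map_mul]
  -- the entry formula
  have hentry : (toRat c * (sIm A)⁻¹ * toRat b) 0 0
      = (Φ A.charpoly)⁻¹ * ∑ i ∈ Finset.range n, p (i + 1) * φ ((c * A ^ i * b) 0 0) := by
    rw [hinv, Matrix.mul_smul, Matrix.smul_mul, Matrix.smul_apply, smul_eq_mul]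
    congr 1
    show (toRat c * (∑ i ∈ Finset.range n, p (i + 1) • A' ^ i) * toRat b) 0 0 = _
    rw [Matrix.mul_sum, Matrix.sum_mul, Matrix.sum_apply]
    refine Finset.sum_congr rfl fun i hi => ?_
    rw [Matrix.mul_smul, Matrix.smul_mul, hmap i, Matrix.smul_apply, smul_eq_mul]
    rfl
  -- the two stated sums, rewritten
  have hsum1 : ∑ k ∈ Finset.Icc 1 n, p k * φ ((c * A ^ (k - 1) * b) 0 0)
      = ∑ i ∈ Finset.range n, p (i + 1) * φ ((c * A ^ i * b) 0 0) := by
    rw [sum_Icc_one]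
    refine Finset.sum_congr rfl fun i hi => ?_
    rw [Nat.add_sub_cancel]
  have main1 : Φ A.charpoly * ((toRat c * (sIm A)⁻¹ * toRat b) 0 0)
      = ∑ k ∈ Finset.Icc 1 n, p k * φ ((c * A ^ (k - 1) * b) 0 0) := by
    rw [hentry, ← mul_assoc, mul_inv_cancel₀ hΔ, one_mul, hsum1]
  have hsub : ∑ k ∈ Finset.Icc d n, p k * φ ((c * A ^ (k - 1) * b) 0 0)
      = ∑ k ∈ Finset.Icc 1 n, p k * φ ((c * A ^ (k - 1) * b) 0 0) := by
    refine Finset.sum_subset ?_ ?_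
    · intro k hk
      simp only [Finset.mem_Icc] at hk ⊢
      omega
    · intro k hk hk'
      simp only [Finset.mem_Icc] at hk
      simp only [Finset.mem_Icc, not_and, not_le] at hk'
      rw [hzero k hk.1 (by omega)]
      simp
  have main2 : (toRat c * (sIm A)⁻¹ * toRat b) 0 0
      = (∑ k ∈ Finset.Icc d n, p k * φ ((c * A ^ (k - 1) * b) 0 0)) / Φ A.charpoly := by
    rw [hentry, hsub, hsum1, div_eq_inv_mul]
  exact ⟨main1, main2⟩
end
end

section
/- Linear independence of the output derivative rows (equation (26)). Let A ∈ ℝ^{n×n}, B ∈ ℝ^{n×m}, C ∈ ℝ^{p×n} be such that for each i ∈ {1,…,p} the relative order d_i exists (d_i ≤ n and C_i A^{d_i−1} B ≠ 0), and suppose rank B* = p. Then the n_co := d_1 + ⋯ + d_p row vectors {C_i A^j : 1 ≤ i ≤ p, 0 ≤ j ≤ d_i − 1} are linearly independent in ℝ^{1×n}; in particular the n_co × n matrix P stacking these rows has rank n_co, and d_1 + ⋯ + d_p ≤ n. -/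
/-!
Given a relation `∑ g i j • Cᵢ Aʲ = 0`, multiply it on the right by `Aˢ B`. The terms with
`j + s < dᵢ - 1` vanish by minimality of the relative orders, so once the coefficients with
`j + s > dᵢ - 1` are known to vanish, only the terms with `j + s = dᵢ - 1` survive: they form a
relation among the rows `Cᵢ A^(dᵢ-1) B` of `B*`, which are independent because `rank B* = p`.
Induction on `s` kills every coefficient.
-/

open Matrix

theorem Matrix.linearIndependent_row_of_rank_eq_card {R m n : Type*} [Field R] [Fintype m]
    [Fintype n] {M : Matrix m n R} (h : M.rank = Fintype.card m) : LinearIndependent R M.row := by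
  rw [linearIndependent_iff_card_eq_finrank_span, ← h, M.rank_eq_finrank_span_row]
  rfl

theorem Matrix.vecMulLinear_pow_apply {R n : Type*} [Semiring R] [Fintype n] [DecidableEq n]
    (A : Matrix n n R) (k : ℕ) (v : n → R) : (A.vecMulLinear ^ k) v = v ᵥ* (A ^ k) := by
  induction k generalizing v with
  | zero => simp
  | succ k ih =>
    rw [pow_succ, Module.End.mul_apply, ih, vecMulLinear_apply, vecMul_vecMul, pow_succ']

section

variable {R M N ι : Type*} [Ring R] [AddCommGroup M] [Module R M] [AddCommGroup N] [Module R N]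
  (f : M →ₗ[R] M) (β : M →ₗ[R] N) (c : ι → M) (d : ι → ℕ)

theorem sum_smul_map_pow_add (hzero : ∀ i j, j + 1 < d i → β ((f ^ j) (c i)) = 0)
    (i : ι) (s : ℕ) (g : Fin (d i) → R) (hg : ∀ j : Fin (d i), d i < j + s + 1 → g j = 0) :
    ∑ j : Fin (d i), g j • β ((f ^ (s + j)) (c i)) =
      (if h : s < d i then g ⟨d i - 1 - s, by omega⟩ else 0) • β ((f ^ (d i - 1)) (c i)) := by
  split_ifs with hs
  · rw [Fintype.sum_eq_single ⟨d i - 1 - s, by omega⟩]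
    · rw [Fin.val_mk, Nat.add_sub_cancel' (by omega : s ≤ d i - 1)]
    · intro j hj
      rcases lt_trichotomy (j + s + 1 : ℕ) (d i) with hlt | heq | hgt
      · rw [hzero i _ (by omega), smul_zero]
      · exact absurd (Fin.ext (by simp only; omega)) hj
      · rw [hg j hgt, zero_smul]
  · rw [zero_smul]
    exact Finset.sum_eq_zero fun j _ => by rw [hg j (by omega), zero_smul]

theorem linearIndependent_sigma_pow_apply [Fintype ι]
    (hzero : ∀ i j, j + 1 < d i → β ((f ^ j) (c i)) = 0)
    (hli : LinearIndependent R fun i => β ((f ^ (d i - 1)) (c i))) :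
    LinearIndependent R fun ij : (i : ι) × Fin (d i) => (f ^ (ij.2 : ℕ)) (c ij.1) := by
  rw [Fintype.linearIndependent_iff]
  intro g hg
  have layer : ∀ s, ∀ ij : (i : ι) × Fin (d i), (ij.2 : ℕ) + s + 1 = d ij.1 → g ij = 0 := by
    intro s
    induction s using Nat.strong_induction_on with
    | _ s ih =>
      rintro ⟨i, j⟩ (hj : (j : ℕ) + s + 1 = d i)
      have hrel : ∑ i', (if h : s < d i' then g ⟨i', ⟨d i' - 1 - s, by omega⟩⟩ else 0) •
          β ((f ^ (d i' - 1)) (c i')) = 0 := by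
        have := congrArg (β ∘ₗ f ^ s) hg
        simp only [map_sum, map_smul, LinearMap.comp_apply, ← Module.End.mul_apply, ← pow_add,
          map_zero, Fintype.sum_sigma] at this
        rw [← this]
        refine Finset.sum_congr rfl fun i' _ => ?_
        refine (sum_smul_map_pow_add f β c d hzero i' s (fun j' => g ⟨i', j'⟩) ?_).symm
        intro j' hj'
        exact ih (d i' - 1 - j') (by omega) ⟨i', j'⟩ (by simp only; omega)
      have := Fintype.linearIndependent_iff.mp hli _ hrel i
      rw [dif_pos (by omega)] at this
      convert this using 4
      omega
  rintro ⟨i, j⟩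
  exact layer (d i - 1 - j) ⟨i, j⟩ (by simp only; omega)

end

theorem output_derivative_rows_independent_general
    (n m p : ℕ) (A : Matrix (Fin n) (Fin n) ℝ) (B : Matrix (Fin n) (Fin m) ℝ)
    (C : Matrix (Fin p) (Fin n) ℝ) (d : Fin p → ℕ)
    (hdmin : ∀ i, ∀ j, 1 ≤ j → j < d i → (fun l => (C * A ^ (j - 1) * B) i l) = 0)
    (Bstar : Matrix (Fin p) (Fin m) ℝ)
    (hBstar : Bstar = Matrix.of fun i j => (C * A ^ (d i - 1) * B) i j)
    (hrank : Bstar.rank = p)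
    (P : Matrix ((i : Fin p) × Fin (d i)) (Fin n) ℝ)
    (hP : P = Matrix.of fun ij l => (C * A ^ (ij.2 : ℕ)) ij.1 l) :
    LinearIndependent ℝ (fun ij : (i : Fin p) × Fin (d i) =>
        (fun l => (C * A ^ (ij.2 : ℕ)) ij.1 l : Fin n → ℝ)) ∧
      P.rank = ∑ i, d i ∧ (∑ i, d i) ≤ n := by
  have hzero : ∀ i j, j + 1 < d i → C i ᵥ* A ^ j ᵥ* B = 0 := fun i j hj =>
    hdmin i (j + 1) (by omega) hj
  have hBstar_rows : LinearIndependent ℝ fun i => C i ᵥ* A ^ (d i - 1) ᵥ* B := by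
    have := linearIndependent_row_of_rank_eq_card (hrank.trans (Fintype.card_fin p).symm)
    rwa [hBstar] at this
  have hrows :
      LinearIndependent ℝ fun ij : (i : Fin p) × Fin (d i) => C ij.1 ᵥ* A ^ (ij.2 : ℕ) := by
    simpa only [vecMulLinear_pow_apply, vecMulLinear_apply] using
      linearIndependent_sigma_pow_apply A.vecMulLinear B.vecMulLinear C d
        (by simpa only [vecMulLinear_pow_apply, vecMulLinear_apply] using hzero)
        (by simpa only [vecMulLinear_pow_apply, vecMulLinear_apply] using hBstar_rows)
  refine ⟨hrows, ?_, ?_⟩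
  · rw [(hP ▸ hrows : LinearIndependent ℝ P.row).rank_matrix, Fintype.card_sigma]
    simp
  · simpa [Fintype.card_sigma] using hrows.fintype_card_le_finrank

/-- Linear independence of the output derivative rows (equation (26)): if each
relative order `d i` exists and `rank B* = p`, then the `n_co = d 1 + ⋯ + d p`
row vectors `Cᵢ Aʲ` (`1 ≤ i ≤ p`, `0 ≤ j ≤ dᵢ - 1`) are linearly independent;
in particular the matrix `P` stacking them has rank `n_co`, and `n_co ≤ n`. -/
theorem output_derivative_rows_independent
    (n m p : ℕ) (A : Matrix (Fin n) (Fin n) ℝ) (B : Matrix (Fin n) (Fin m) ℝ)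
    (C : Matrix (Fin p) (Fin n) ℝ) (d : Fin p → ℕ)
    (hd1 : ∀ i, 1 ≤ d i) (hdn : ∀ i, d i ≤ n)
    (hdne : ∀ i, (fun j => (C * A ^ (d i - 1) * B) i j) ≠ 0)
    (hdmin : ∀ i, ∀ j, 1 ≤ j → j < d i → (fun l => (C * A ^ (j - 1) * B) i l) = 0)
    (Bstar : Matrix (Fin p) (Fin m) ℝ)
    (hBstar : Bstar = Matrix.of fun i j => (C * A ^ (d i - 1) * B) i j)
    (hrank : Bstar.rank = p)
    (P : Matrix ((i : Fin p) × Fin (d i)) (Fin n) ℝ)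
    (hP : P = Matrix.of fun ij l => (C * A ^ (ij.2 : ℕ)) ij.1 l) :
    LinearIndependent ℝ (fun ij : (i : Fin p) × Fin (d i) =>
        (fun l => (C * A ^ (ij.2 : ℕ)) ij.1 l : Fin n → ℝ)) ∧
      P.rank = ∑ i, d i ∧ (∑ i, d i) ≤ n :=
  output_derivative_rows_independent_general n m p A B C d hdmin Bstar hBstar hrank P hP
end
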